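/- arXiv:2601.18782 — 2 statements merged into one kernel-verified Lean document; each statement's English description precedes it below -/
import Mathlib

section
/- Let f = X_r α be an r-bandlimited graph signal with ‖f‖_∞ = 1, where X_r ∈ ℝ^{N×r} has orthonormal columns and has incoherence μ_r := (N/r) max_i ‖X_r X_rᵀ e_i‖₂². Then ‖f‖₂² ≥ N/(r μ_r). -/
open Matrix

/-- Squared Euclidean norm of a finite real vector. -/
noncomputable def sqnorm {k : ℕ} (v : Fin k → ℝ) : ℝ := ∑ j, (v j) ^ 2

/-- Incoherence of the column span of `X`. -/
noncomputable def incoherence (N r : ℕ) (X : Matrix (Fin N) (Fin r) ℝ) : ℝ :=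
  (N / r : ℝ) * ⨆ i : Fin N, sqnorm ((X * Xᵀ).mulVec (Pi.single i 1))

/-!
Since `Xᵀ X = 1`, the matrix `P = X Xᵀ` is a symmetric projection fixing `f`, so each entry is an
inner product `f i = ⟪P eᵢ, f⟫`. At an index where `|f i| = ‖f‖_∞ = 1`, Cauchy–Schwarz gives
`1 ≤ ‖P eᵢ‖² ‖f‖² ≤ (r μ_r / N) ‖f‖²`.
-/

theorem sqnorm_nonneg {k : ℕ} (v : Fin k → ℝ) : 0 ≤ sqnorm v :=
  Finset.sum_nonneg fun j _ => sq_nonneg (v j)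

theorem sq_dotProduct_le_sqnorm_mul_sqnorm {k : ℕ} (v w : Fin k → ℝ) :
    (v ⬝ᵥ w) ^ 2 ≤ sqnorm v * sqnorm w :=
  Finset.sum_mul_sq_le_sq_mul_sq Finset.univ v w

theorem Matrix.mul_mulVec_mulVec_of_mul_eq_one {m n R : Type*} [Fintype m] [Fintype n]
    [DecidableEq n] [Semiring R] {X : Matrix m n R} {Y : Matrix n m R} (hYX : Y * X = 1)
    (α : n → R) : (X * Y) *ᵥ (X *ᵥ α) = X *ᵥ α := by
  rw [← mulVec_mulVec, mulVec_mulVec (M := Y), hYX, one_mulVec]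

theorem Matrix.mulVec_apply_eq_transpose_mulVec_single_dotProduct {m n R : Type*} [Fintype m]
    [Fintype n] [DecidableEq m] [NonAssocSemiring R] (A : Matrix m n R) (v : n → R) (i : m) :
    (A *ᵥ v) i = (Aᵀ *ᵥ Pi.single i 1) ⬝ᵥ v := by
  rw [mulVec_single_one]
  rfl

theorem sq_apply_le_sqnorm_mulVec_single_mul_sqnorm {k : ℕ} {P : Matrix (Fin k) (Fin k) ℝ}
    (hP : Pᵀ = P) {f : Fin k → ℝ} (hf : P *ᵥ f = f) (i : Fin k) :
    f i ^ 2 ≤ sqnorm (P *ᵥ Pi.single i 1) * sqnorm f := by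
  conv_lhs => rw [← hf, mulVec_apply_eq_transpose_mulVec_single_dotProduct, hP]
  exact sq_dotProduct_le_sqnorm_mul_sqnorm _ _

theorem Real.exists_eq_of_iSup_eq {ι : Type*} [Finite ι] {g : ι → ℝ} {c : ℝ} (hc : c ≠ 0)
    (h : ⨆ i, g i = c) : ∃ i, g i = c := by
  cases isEmpty_or_nonempty ι with
  | inl _ => exact absurd (h ▸ Real.iSup_of_isEmpty g) hc
  | inr _ => exact h ▸ exists_eq_ciSup_of_finite

theorem stmt_2_general (N r : ℕ) (hr : 0 < r)
    (X : Matrix (Fin N) (Fin r) ℝ) (hX : Xᵀ * X = 1)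
    (α : Fin r → ℝ) (f : Fin N → ℝ) (hf : f = X.mulVec α)
    (hinf : (⨆ i : Fin N, |f i|) = 1) :
    (N : ℝ) / (r * incoherence N r X) ≤ sqnorm f := by
  set P := X * Xᵀ
  have hPsymm : Pᵀ = P := by rw [transpose_mul, transpose_transpose]
  have hPf : P *ᵥ f = f := hf ▸ mul_mulVec_mulVec_of_mul_eq_one hX α
  obtain ⟨i, hi⟩ := Real.exists_eq_of_iSup_eq one_ne_zero hinf
  set s := ⨆ j, sqnorm (P *ᵥ Pi.single j 1)
  have hs : 1 ≤ s * sqnorm f :=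
    calc 1 = f i ^ 2 := by rw [← sq_abs, hi, one_pow]
      _ ≤ sqnorm (P *ᵥ Pi.single i 1) * sqnorm f :=
        sq_apply_le_sqnorm_mulVec_single_mul_sqnorm hPsymm hPf i
      _ ≤ s * sqnorm f := by
        gcongr
        · exact sqnorm_nonneg f
        · exact Finite.le_ciSup (fun j => sqnorm (P *ᵥ Pi.single j 1)) i
  have hs_pos : 0 < s := pos_of_mul_pos_left (one_pos.trans_le hs) (sqnorm_nonneg f)
  have hμ : (N : ℝ) / (r * incoherence N r X) = 1 / s := by
    have hN : (N : ℝ) ≠ 0 := Nat.cast_ne_zero.mpr i.pos.ne'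
    have hr' : (r : ℝ) ≠ 0 := Nat.cast_ne_zero.mpr hr.ne'
    change (N : ℝ) / (r * ((N / r) * s)) = 1 / s
    field_simp
  rwa [hμ, div_le_iff₀ hs_pos, mul_comm]

/-- An `r`-bandlimited graph signal `f = X_r α` with `‖f‖_∞ = 1` satisfies
`‖f‖₂² ≥ N / (r μ_r)`. -/
theorem stmt_2 (N r : ℕ) (hr : 0 < r) (hrN : r ≤ N)
    (X : Matrix (Fin N) (Fin r) ℝ) (hX : Xᵀ * X = 1)
    (α : Fin r → ℝ) (f : Fin N → ℝ) (hf : f = X.mulVec α)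
    (hinf : (⨆ i : Fin N, |f i|) = 1) :
    (N : ℝ) / (r * incoherence N r X) ≤ sqnorm f :=
  stmt_2_general N r hr X hX α f hf hinf
end

section
/- State-norm growth bound: let u_0 = 0 ∈ ℝ^n and suppose for each i = 1, …, M that u_i = u_{i−1} + (f_i − q_i) ℓ_i where ℓ_i ∈ ℝ^n is nonzero with ‖ℓ_i‖₂² ≤ B, and either (a) |f_i + ⟨ℓ_i, u_{i−1}⟩/‖ℓ_i‖₂² − q_i| ≤ δ/2, or (b) |f_i + ⟨ℓ_i, u_{i−1}⟩/‖ℓ_i‖₂² − q_i| ≤ |⟨ℓ_i, u_{i−1}⟩/‖ℓ_i‖₂²|. Then ‖u_M‖₂² ≤ M B δ²/4. -/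
/-! Write `c = ⟪ℓ, u⟫ / ‖ℓ‖²` and `e = f + c - q`. Expanding the square gives
`‖u + (e - c) ℓ‖² = ‖u‖² + (e² - c²) ‖ℓ‖²`, so a `δ/2`-accurate step adds at most `B δ² / 4`
to the squared norm and a saturated step (`|e| ≤ |c|`) does not increase it. -/

open RealInnerProductSpace

section StepBound

variable {E : Type*} [NormedAddCommGroup E] [InnerProductSpace ℝ E]

lemma norm_add_sub_smul_sq_of_inner_eq {u v : E} {c : ℝ} (hc : ⟪v, u⟫ = c * ‖v‖ ^ 2) (e : ℝ) :
    ‖u + (e - c) • v‖ ^ 2 = ‖u‖ ^ 2 + (e ^ 2 - c ^ 2) * ‖v‖ ^ 2 := by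
  rw [norm_add_sq_real, real_inner_smul_right, real_inner_comm, hc, norm_smul,
    Real.norm_eq_abs, mul_pow, sq_abs]
  ring

lemma inner_eq_inner_div_norm_sq_mul (u v : E) : ⟪v, u⟫ = ⟪v, u⟫ / ‖v‖ ^ 2 * ‖v‖ ^ 2 := by
  rcases eq_or_ne v 0 with rfl | hv
  · simp
  · exact (div_mul_cancel₀ _ (by positivity)).symm

lemma norm_add_smul_sq_le {u v : E} {t δ B : ℝ} (hv : ‖v‖ ^ 2 ≤ B)
    (h : |t + ⟪v, u⟫ / ‖v‖ ^ 2| ≤ δ / 2 ∨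
      |t + ⟪v, u⟫ / ‖v‖ ^ 2| ≤ |⟪v, u⟫ / ‖v‖ ^ 2|) :
    ‖u + t • v‖ ^ 2 ≤ ‖u‖ ^ 2 + B * δ ^ 2 / 4 := by
  set c := ⟪v, u⟫ / ‖v‖ ^ 2
  set e := t + c
  have hB : 0 ≤ B := (sq_nonneg _).trans hv
  have ht : t = e - c := by ring
  rw [ht, norm_add_sub_smul_sq_of_inner_eq (inner_eq_inner_div_norm_sq_mul u v)]
  rcases h with accurate | saturated
  · have he : e ^ 2 ≤ (δ / 2) ^ 2 := sq_le_sq' (abs_le.mp accurate).1 (abs_le.mp accurate).2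
    have : e ^ 2 * ‖v‖ ^ 2 ≤ (δ / 2) ^ 2 * B := mul_le_mul he hv (by positivity) (by positivity)
    nlinarith [sq_nonneg c, sq_nonneg ‖v‖]
  · have : e ^ 2 ≤ c ^ 2 := sq_le_sq.mpr saturated
    nlinarith [sq_nonneg ‖v‖, sq_nonneg δ]

end StepBound

lemma le_mul_of_succ_le_add {a : ℕ → ℝ} {d : ℝ} {M : ℕ} (h0 : a 0 = 0)
    (hstep : ∀ k < M, a (k + 1) ≤ a k + d) : a M ≤ M * d := by
  suffices ∀ k ≤ M, a k ≤ k * d from this M le_rfl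
  intro k hk
  induction k with
  | zero => simp [h0]
  | succ k ih =>
    push_cast
    linarith [hstep k hk, ih (Nat.le_of_succ_le hk)]

theorem stmt_11_general (n M : ℕ) (δ B : ℝ)
    (ℓ : Fin M → EuclideanSpace ℝ (Fin n)) (f q : Fin M → ℝ)
    (u : ℕ → EuclideanSpace ℝ (Fin n)) (hu0 : u 0 = 0)
    (hrec : ∀ i : Fin M, u (i + 1) = u i + (f i - q i) • ℓ i)
    (hbnd : ∀ i : Fin M, ‖ℓ i‖ ^ 2 ≤ B)
    (hcase : ∀ i : Fin M,
      |f i + (inner ℝ (ℓ i) (u i) : ℝ) / ‖ℓ i‖ ^ 2 - q i| ≤ δ / 2 ∨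
      |f i + (inner ℝ (ℓ i) (u i) : ℝ) / ‖ℓ i‖ ^ 2 - q i| ≤
        |(inner ℝ (ℓ i) (u i) : ℝ) / ‖ℓ i‖ ^ 2|) :
    ‖u M‖ ^ 2 ≤ M * B * δ ^ 2 / 4 := by
  have hstep : ∀ k < M, ‖u (k + 1)‖ ^ 2 ≤ ‖u k‖ ^ 2 + B * δ ^ 2 / 4 := fun k hk => by
    have hcase_k := hcase ⟨k, hk⟩
    simp only [add_sub_right_comm (f _)] at hcase_k
    exact hrec ⟨k, hk⟩ ▸ norm_add_smul_sq_le (hbnd ⟨k, hk⟩) hcase_k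
  have := le_mul_of_succ_le_add (a := fun k => ‖u k‖ ^ 2) (by simp [hu0]) hstep
  linarith

/-- State-norm growth bound for the noise-shaping recursion: starting from
`u₀ = 0` and updating `u_i = u_{i−1} + (f_i − q_i)ℓ_i`, where each step is
either `δ/2`-accurate or saturated, we get `‖u_M‖₂² ≤ M B δ²/4`. -/
theorem stmt_11 (n M : ℕ) (δ B : ℝ) (hδ : 0 < δ) (hB : 0 < B)
    (ℓ : Fin M → EuclideanSpace ℝ (Fin n)) (f q : Fin M → ℝ)
    (u : ℕ → EuclideanSpace ℝ (Fin n)) (hu0 : u 0 = 0)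
    (hrec : ∀ i : Fin M, u (i + 1) = u i + (f i - q i) • ℓ i)
    (hne : ∀ i : Fin M, ℓ i ≠ 0)
    (hbnd : ∀ i : Fin M, ‖ℓ i‖ ^ 2 ≤ B)
    (hcase : ∀ i : Fin M,
      |f i + (inner ℝ (ℓ i) (u i) : ℝ) / ‖ℓ i‖ ^ 2 - q i| ≤ δ / 2 ∨
      |f i + (inner ℝ (ℓ i) (u i) : ℝ) / ‖ℓ i‖ ^ 2 - q i| ≤
        |(inner ℝ (ℓ i) (u i) : ℝ) / ‖ℓ i‖ ^ 2|) :
    ‖u M‖ ^ 2 ≤ M * B * δ ^ 2 / 4 :=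
  stmt_11_general n M δ B ℓ f q u hu0 hrec hbnd hcase
end
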